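/- Let f : F_2^k → S be a function with image {f₁, …, f_E} of size E, and t ≥ 1. Then r^f_ID(k, t) ≤ N^(2)_ID(I_f^(2)(t, f₁, …, f_E); k), where I_f^(2)(t, f₁, …, f_E) is the function distance matrix of f. -/

import Mathlib

/-- Length of a longest common subsequence of two binary words. -/
noncomputable def lcsLen (x y : List Bool) : ℕ :=
  sSup {n | ∃ z : List Bool, z.length = n ∧ z.Sublist x ∧ z.Sublist y}

/-- The insdel distance `d_ID(x,y) = |x| + |y| - 2·LCS(x,y)`. -/
noncomputable def dID (x y : List Bool) : ℕ :=
  x.length + y.length - 2 * lcsLen x y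

/-- Number of runs (maximal blocks of consecutive equal symbols) of a binary word. -/
def runs (x : List Bool) : ℕ := (x.destutter (· ≠ ·)).length

/-- Maximum run length of a binary word: the largest `n` such that some constant
word of length `n` occurs as a block of consecutive symbols of `x`. -/
noncomputable def maxRun (x : List Bool) : ℕ :=
  sSup {n | ∃ b : Bool, (List.replicate n b).IsInfix x}

/-- `D_t(x)`: the words of length `|x| - t` that are subsequences of `x`. -/
def Dset (t : ℕ) (x : List Bool) : Set (List Bool) :=
  {z | z.length = x.length - t ∧ z.Sublist x}

/-- `I_t(x)`: the words of length `|x| + t` that are supersequences of `x`. -/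
def Iset (t : ℕ) (x : List Bool) : Set (List Bool) :=
  {z | z.length = x.length + t ∧ x.Sublist z}

/-- A systematic encoding `x ↦ (x, p(x))` with redundancy words `p x` of length `r`
is a function-correcting insdel code for `f` correcting `t` insdel errors. -/
noncomputable def IsFCIDC {k : ℕ} {S : Type*} (f : (Fin k → Bool) → S) (t r : ℕ)
    (p : (Fin k → Bool) → List Bool) : Prop :=
  (∀ x, (p x).length = r) ∧
  ∀ x y, f x ≠ f y → 2 * t < dID (List.ofFn x ++ p x) (List.ofFn y ++ p y)

/-- The optimal redundancy `r^f_ID(k,t)`. -/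
noncomputable def optRed {k : ℕ} {S : Type*} (f : (Fin k → Bool) → S) (t : ℕ) : ℕ :=
  sInf {r | ∃ p, IsFCIDC f t r p}

/-- `p` is an irregular insdel-distance code of length `r` for the matrix `I`. -/
noncomputable def IsIrregularCode {M : ℕ} (I : Fin M → Fin M → ℕ) (r : ℕ)
    (p : Fin M → List Bool) : Prop :=
  (∀ i, (p i).length = r) ∧ ∀ i j, I i j ≤ dID (p i) (p j)

/-- `N^(1)_ID(I)`: least length of an irregular insdel-distance code for `I`. -/
noncomputable def N1 {M : ℕ} (I : Fin M → Fin M → ℕ) : ℕ :=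
  sInf {r | ∃ p, IsIrregularCode I r p}

/-- `N^(2)_ID(I; K)`: least length `r ≥ K` of an irregular insdel-distance code for `I`. -/
noncomputable def N2 {M : ℕ} (I : Fin M → Fin M → ℕ) (K : ℕ) : ℕ :=
  sInf {r | K ≤ r ∧ ∃ p, IsIrregularCode I r p}

-- The insdel distance matrix `I_f^(1)(t, x₁, …, x_M)`.
open Classical in
noncomputable def Imat1 {k M : ℕ} {S : Type*} (f : (Fin k → Bool) → S) (t : ℕ)
    (x : Fin M → Fin k → Bool) : Fin M → Fin M → ℕ :=
  fun i j => if f (x i) ≠ f (x j) then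
    2 * t + 2 - dID (List.ofFn (x i)) (List.ofFn (x j)) else 0

-- The insdel distance matrix `I_f^(2)(t, x₁, …, x_M)`.
open Classical in
noncomputable def Imat2 {k M : ℕ} {S : Type*} (f : (Fin k → Bool) → S) (t : ℕ)
    (x : Fin M → Fin k → Bool) : Fin M → Fin M → ℕ :=
  fun i j => if f (x i) ≠ f (x j) then
    2 * t + 2 + 2 * k - dID (List.ofFn (x i)) (List.ofFn (x j)) else 0

/-- The function distance `d^f_ID(a,b)`. -/
noncomputable def dfID {k : ℕ} {S : Type*} (f : (Fin k → Bool) → S) (a b : S) : ℕ :=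
  sInf {d | ∃ x y : Fin k → Bool, f x = a ∧ f y = b ∧ dID (List.ofFn x) (List.ofFn y) = d}

/-- The function distance matrix `I_f^(2)(t, f₁, …, f_E)`, with entries
`max(2(t+1+k) − d^f_ID(f_i, f_j), 0)` off the diagonal and `0` on the diagonal. -/
noncomputable def funMat2 {k E : ℕ} {S : Type*} (f : (Fin k → Bool) → S) (t : ℕ)
    (fs : Fin E → S) : Fin E → Fin E → ℕ :=
  fun i j => if i = j then 0 else 2 * (t + 1 + k) - dfID f (fs i) (fs j)

/-- The uniform `M × M` matrix with off-diagonal entries `d` and zero diagonal. -/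
def uniMat (M d : ℕ) : Fin M → Fin M → ℕ := fun i j => if i = j then 0 else d

/-- The number-of-runs function on `F_2^k`. -/
def runsFn (k : ℕ) (x : Fin k → Bool) : ℕ := runs (List.ofFn x)

/-- The VT-syndrome function `f(x) = Σ_{j=1}^k j·x_j mod (k+1)`. -/
def vtFn (k : ℕ) (x : Fin k → Bool) : ℕ :=
  (∑ j : Fin k, ((j : ℕ) + 1) * (if x j then 1 else 0)) % (k + 1)

/-- The function ball `B^f_ID(u, ρ) = f(B_ID(u, ρ))`. -/
def fball {k : ℕ} {S : Type*} (f : (Fin k → Bool) → S) (u : Fin k → Bool) (ρ : ℕ) : Set S :=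
  f '' {v : Fin k → Bool | dID (List.ofFn u) (List.ofFn v) ≤ ρ}

/-- `V_ID(r, d)`: the maximum size of an insdel ball of (integer) radius `d`
among centers in `F_2^r`. -/
noncomputable def Vid (r : ℕ) (d : ℤ) : ℕ :=
  sSup (Set.range fun x : Fin r → Bool =>
    Nat.card {y : Fin r → Bool | (dID (List.ofFn x) (List.ofFn y) : ℤ) ≤ d})

/-
Prepending words of equal length `n` to two words raises their LCS by at most `n`, so it
cannot lower their insdel distance. Hence if `q` is an irregular code for the function
distance matrix, `x ↦ (x, q_{f(x)})` keeps the redundancy parts of `x, y` with `f x ≠ f y` at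
distance at least `2(t + 1 + k) - d^f_ID(f x, f y) ≥ 2t + 2`, because `d^f_ID ≤ 2k`.
Since `N2` is an `sInf` (junk value `0` when there is no code), we also need that irregular
codes of length at least `K` exist for every zero-diagonal matrix: spread the
numbers of ones far enough apart, since the LCS of two words is at most the sum over
`b ∈ {0, 1}` of the smaller number of `b`'s.
-/

lemma bddAbove_commonSublist_lengths (x y : List Bool) :
    BddAbove {n | ∃ z : List Bool, z.length = n ∧ z.Sublist x ∧ z.Sublist y} :=
  ⟨x.length, fun _ ⟨_, hz, hx, _⟩ => hz ▸ hx.length_le⟩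

lemma exists_commonSublist_length_eq_lcsLen (x y : List Bool) :
    ∃ z : List Bool, z.length = lcsLen x y ∧ z.Sublist x ∧ z.Sublist y :=
  Nat.sSup_mem ⟨0, by exact ⟨[], rfl, List.nil_sublist _, List.nil_sublist _⟩⟩
    (bddAbove_commonSublist_lengths x y)

lemma length_le_lcsLen {z x y : List Bool} (hx : z.Sublist x) (hy : z.Sublist y) :
    z.length ≤ lcsLen x y :=
  le_csSup (bddAbove_commonSublist_lengths x y) ⟨z, rfl, hx, hy⟩

lemma List.Sublist.drop_sublist_of_append {z x p : List Bool} {s : ℕ} (h : z.Sublist (x ++ p))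
    (hs : x.length ≤ s) : (z.drop s).Sublist p := by
  obtain ⟨z₁, z₂, rfl, h₁, h₂⟩ := List.sublist_append_iff.mp h
  have hz₁ : z₁.length ≤ s := h₁.length_le.trans hs
  rw [List.drop_append, List.drop_eq_nil_of_le hz₁, List.nil_append]
  exact (List.drop_sublist _ _).trans h₂

lemma lcsLen_append_le (x y p q : List Bool) :
    lcsLen (x ++ p) (y ++ q) ≤ max x.length y.length + lcsLen p q := by
  obtain ⟨z, hz, hxp, hyq⟩ := exists_commonSublist_length_eq_lcsLen (x ++ p) (y ++ q)
  have htail : (z.drop (max x.length y.length)).length ≤ lcsLen p q :=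
    length_le_lcsLen (hxp.drop_sublist_of_append (le_max_left _ _))
      (hyq.drop_sublist_of_append (le_max_right _ _))
  rw [List.length_drop] at htail
  omega

lemma lcsLen_le_min_count_add_min_count (u v : List Bool) :
    lcsLen u v ≤ min (u.count true) (v.count true) + min (u.count false) (v.count false) := by
  obtain ⟨z, hz, hu, hv⟩ := exists_commonSublist_length_eq_lcsLen u v
  rw [← hz, ← List.count_true_add_count_false z]
  exact add_le_add (le_min (hu.count_le _) (hv.count_le _)) (le_min (hu.count_le _) (hv.count_le _))

lemma dID_le_length_add_length (x y : List Bool) : dID x y ≤ x.length + y.length :=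
  Nat.sub_le _ _

lemma dID_le_dID_append_append {x y : List Bool} (hxy : x.length = y.length) (p q : List Bool) :
    dID p q ≤ dID (x ++ p) (y ++ q) := by
  have := lcsLen_append_le x y p q
  simp only [dID, List.length_append, hxy, max_self] at this ⊢
  omega

lemma dfID_apply_le {k : ℕ} {S : Type*} (f : (Fin k → Bool) → S) (x y : Fin k → Bool) :
    dfID f (f x) (f y) ≤ 2 * k :=
  calc dfID f (f x) (f y) ≤ dID (List.ofFn x) (List.ofFn y) :=
        Nat.sInf_le ⟨x, y, rfl, rfl, rfl⟩
    _ ≤ 2 * k := by simpa [two_mul] using dID_le_length_add_length (List.ofFn x) (List.ofFn y)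

section IrregularCode

variable {M : ℕ} (I : Fin M → Fin M → ℕ)

def stairWord (K D : ℕ) (i : Fin M) : List Bool :=
  List.replicate (i * D) true ++ List.replicate (K + (M - i) * D) false

lemma length_stairWord (K D : ℕ) (i : Fin M) : (stairWord K D i).length = K + M * D := by
  have : (i : ℕ) * D + (M - i) * D = M * D := by rw [← add_mul, Nat.add_sub_cancel' i.is_lt.le]
  simp only [stairWord, List.length_append, List.length_replicate]
  omega

lemma count_true_stairWord (K D : ℕ) (i : Fin M) : (stairWord K D i).count true = i * D := by
  simp [stairWord, List.count_replicate]

lemma count_false_stairWord (K D : ℕ) (i : Fin M) :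
    (stairWord K D i).count false = K + (M - i) * D := by
  simp [stairWord, List.count_replicate]

lemma le_dID_stairWord (K D : ℕ) {i j : Fin M} (hij : i ≠ j) :
    D ≤ dID (stairWord K D i) (stairWord K D j) := by
  have hlcs := lcsLen_le_min_count_add_min_count (stairWord K D i) (stairWord K D j)
  have hsep : (i : ℕ) * D + D ≤ j * D ∨ (j : ℕ) * D + D ≤ i * D := by
    rcases Fin.lt_or_lt_of_ne hij with h | h
    · exact .inl (by simpa [add_mul] using Nat.mul_le_mul_right D (Nat.succ_le_of_lt h))
    · exact .inr (by simpa [add_mul] using Nat.mul_le_mul_right D (Nat.succ_le_of_lt h))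
  have hi := List.count_true_add_count_false (stairWord K D i)
  have hj := List.count_true_add_count_false (stairWord K D j)
  rw [count_true_stairWord, count_false_stairWord, length_stairWord] at hi hj
  rw [count_true_stairWord, count_true_stairWord, count_false_stairWord,
    count_false_stairWord] at hlcs
  simp only [dID, length_stairWord]
  omega

lemma exists_isIrregularCode (hI : ∀ i, I i i = 0) (K : ℕ) :
    ∃ r, K ≤ r ∧ ∃ p, IsIrregularCode I r p := by
  set D := ∑ i, ∑ j, I i j
  refine ⟨K + M * D, Nat.le_add_right _ _, stairWord K D, length_stairWord K D, fun i j => ?_⟩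
  rcases eq_or_ne i j with rfl | hij
  · simp [hI]
  · calc I i j ≤ ∑ j, I i j :=
          Finset.single_le_sum (fun _ _ => Nat.zero_le _) (Finset.mem_univ j)
      _ ≤ D := Finset.single_le_sum (f := fun i => ∑ j, I i j) (fun _ _ => Nat.zero_le _)
          (Finset.mem_univ i)
      _ ≤ _ := le_dID_stairWord K D hij

lemma N2_mem (hI : ∀ i, I i i = 0) (K : ℕ) :
    N2 I K ∈ {r | K ≤ r ∧ ∃ p, IsIrregularCode I r p} := by
  obtain ⟨r, hr⟩ := exists_isIrregularCode I hI K
  exact Nat.sInf_mem ⟨r, hr⟩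

end IrregularCode

lemma IsIrregularCode.exists_isFCIDC {k E r : ℕ} {S : Type*} {f : (Fin k → Bool) → S}
    {t : ℕ} {fs : Fin E → S} (hrange : Set.range f ⊆ Set.range fs) {q : Fin E → List Bool}
    (hq : IsIrregularCode (funMat2 f t fs) r q) : ∃ p, IsFCIDC f t r p := by
  choose idx hidx using fun x => hrange (Set.mem_range_self x)
  refine ⟨fun x => q (idx x), fun x => hq.1 _, fun x y hxy => ?_⟩
  have hne : idx x ≠ idx y := fun h => hxy (by rw [← hidx x, h, hidx y])
  have hentry := hq.2 (idx x) (idx y)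
  simp only [funMat2, if_neg hne, hidx] at hentry
  have := dfID_apply_le f x y
  calc 2 * t < dID (q (idx x)) (q (idx y)) := by omega
    _ ≤ _ := dID_le_dID_append_append (by simp) _ _

theorem stmt7_general {S : Type*} (k t E : ℕ) (f : (Fin k → Bool) → S)
    (fs : Fin E → S)
    (hrange : Set.range fs = Set.range f) :
    optRed f t ≤ N2 (funMat2 f t fs) k := by
  obtain ⟨-, q, hq⟩ := N2_mem (funMat2 f t fs) (fun i => by simp [funMat2]) k
  exact Nat.sInf_le (hq.exists_isFCIDC hrange.ge)

theorem stmt7 {S : Type*} (k t E : ℕ) (ht : 1 ≤ t) (f : (Fin k → Bool) → S)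
    (fs : Fin E → S) (hinj : Function.Injective fs)
    (hrange : Set.range fs = Set.range f) :
    optRed f t ≤ N2 (funMat2 f t fs) k :=
  stmt7_general k t E f fs hrange
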